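/- arXiv:2501.03963 — 4 statements merged into one kernel-verified Lean document; each statement's English description precedes it below -/
import Mathlib

section
/- Let m, M > 0 with 2M > m. There exists a constant c > 0, depending only on m and M, such that for all ξ₁, ξ₂ ∈ ℝ² and all signs s₁, s₂ ∈ {+1, −1}, if either (a) s₁ = +1 and s₂ = −1, or (b) s₁ = −1, s₂ = +1 and ⟨ξ₁ − ξ₂⟩_m ≤ 2^{−10}·min(⟨ξ₁⟩_M, ⟨ξ₂⟩_M), then |μ^{s₁,s₂}(ξ₁, ξ₂)| ≥ c·max(⟨ξ₁ − ξ₂⟩, ⟨ξ₁⟩, ⟨ξ₂⟩). -/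
noncomputable section

open scoped ENNReal

/-- ℝ² as a Euclidean space. -/
abbrev E2 := EuclideanSpace ℝ (Fin 2)

/-- The Japanese bracket `⟨ξ⟩_M = √(M² + |ξ|²)`. -/
def jb (M : ℝ) (ξ : E2) : ℝ := Real.sqrt (M ^ 2 + ‖ξ‖ ^ 2)

/-- The resonance function `μ^{s₁,s₂}(ξ₁,ξ₂) = ⟨ξ₁-ξ₂⟩_m + s₁⟨ξ₁⟩_M - s₂⟨ξ₂⟩_M`. -/
def resonance (m M s₁ s₂ : ℝ) (ξ₁ ξ₂ : E2) : ℝ :=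
  jb m (ξ₁ - ξ₂) + s₁ * jb M ξ₁ - s₂ * jb M ξ₂

lemma jb_nonneg (M : ℝ) (ξ : E2) : 0 ≤ jb M ξ := Real.sqrt_nonneg _

lemma jb_sq (M : ℝ) (ξ : E2) : (jb M ξ) ^ 2 = M ^ 2 + ‖ξ‖ ^ 2 := by
  rw [jb, Real.sq_sqrt]
  positivity

lemma norm_le_jb (M : ℝ) (ξ : E2) : ‖ξ‖ ≤ jb M ξ := by
  have h1 := jb_nonneg M ξ
  have h2 := jb_sq M ξ
  nlinarith [norm_nonneg ξ, sq_nonneg M]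

/-- comparison of brackets -/
lemma jb_one_le (M : ℝ) (hM : 0 < M) (ξ : E2) :
    min M 1 * jb 1 ξ ≤ jb M ξ := by
  set a := min M 1 with ha
  have ha0 : 0 < a := lt_min hM one_pos
  have ha1 : a ≤ 1 := min_le_right _ _
  have haM : a ≤ M := min_le_left _ _
  have key : a * jb 1 ξ = Real.sqrt (a ^ 2 * (1 ^ 2 + ‖ξ‖ ^ 2)) := by
    rw [Real.sqrt_mul (by positivity), Real.sqrt_sq ha0.le, jb]
  rw [key, jb]
  apply Real.sqrt_le_sqrt
  have haa : a ^ 2 ≤ M ^ 2 := by nlinarith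
  have hab : a ^ 2 * ‖ξ‖ ^ 2 ≤ 1 * ‖ξ‖ ^ 2 := by
    apply mul_le_mul_of_nonneg_right _ (sq_nonneg _)
    nlinarith
  nlinarith [sq_nonneg ‖ξ‖]

/-- Lipschitz property of the bracket -/
lemma jb_lip (M : ℝ) (ξ η : E2) : jb M ξ ≤ jb M η + ‖ξ - η‖ := by
  have h1 := jb_nonneg M η
  have h2 := jb_sq M ξ
  have h3 := jb_sq M η
  have h4 : ‖ξ‖ ≤ ‖η‖ + ‖ξ - η‖ := by
    have := norm_sub_norm_le ξ η
    linarith [abs_le.mp (abs_norm_sub_norm_le ξ η)]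
  have h5 := norm_le_jb M η
  have h6 : 0 ≤ jb M η + ‖ξ - η‖ := by positivity
  nlinarith [norm_nonneg ξ, norm_nonneg (ξ - η), norm_nonneg η]

theorem stmt0 (m M : ℝ) (hm : 0 < m) (hM : 0 < M) (hmM : m < 2 * M) :
    ∃ c : ℝ, 0 < c ∧ ∀ (ξ₁ ξ₂ : E2) (s₁ s₂ : ℝ),
      (s₁ = 1 ∨ s₁ = -1) → (s₂ = 1 ∨ s₂ = -1) →
      ((s₁ = 1 ∧ s₂ = -1) ∨
        (s₁ = -1 ∧ s₂ = 1 ∧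
          jb m (ξ₁ - ξ₂) ≤ (2 : ℝ) ^ (-10 : ℤ) * min (jb M ξ₁) (jb M ξ₂))) →
      c * max (jb 1 (ξ₁ - ξ₂)) (max (jb 1 ξ₁) (jb 1 ξ₂)) ≤
        |resonance m M s₁ s₂ ξ₁ ξ₂| := by
  set a := min (min m M) 1 with ha
  have ha0 : 0 < a := lt_min (lt_min hm hM) one_pos
  have ham : a ≤ m := le_trans (min_le_left _ _) (min_le_left _ _)
  have haM : a ≤ M := le_trans (min_le_left _ _) (min_le_right _ _)
  have ha1 : a ≤ 1 := min_le_right _ _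
  refine ⟨a / 2, by positivity, ?_⟩
  intro ξ₁ ξ₂ s₁ s₂ _ _ hcase
  set d := ξ₁ - ξ₂ with hd
  have hx : min m 1 * jb 1 d ≤ jb m d := jb_one_le m hm d
  have hy : min M 1 * jb 1 ξ₁ ≤ jb M ξ₁ := jb_one_le M hM ξ₁
  have hz : min M 1 * jb 1 ξ₂ ≤ jb M ξ₂ := jb_one_le M hM ξ₂
  have ham1 : a ≤ min m 1 := le_min ham ha1
  have haM1 : a ≤ min M 1 := le_min haM ha1
  have hx' : a * jb 1 d ≤ jb m d :=
    le_trans (mul_le_mul_of_nonneg_right ham1 (jb_nonneg _ _)) hx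
  have hy' : a * jb 1 ξ₁ ≤ jb M ξ₁ :=
    le_trans (mul_le_mul_of_nonneg_right haM1 (jb_nonneg _ _)) hy
  have hz' : a * jb 1 ξ₂ ≤ jb M ξ₂ :=
    le_trans (mul_le_mul_of_nonneg_right haM1 (jb_nonneg _ _)) hz
  have hmax : max (jb 1 d) (max (jb 1 ξ₁) (jb 1 ξ₂)) ≤ jb 1 d + jb 1 ξ₁ + jb 1 ξ₂ := by
    have := jb_nonneg 1 d; have := jb_nonneg 1 ξ₁; have := jb_nonneg 1 ξ₂
    simp only [max_le_iff]
    refine ⟨by linarith, by linarith, by linarith⟩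
  rcases hcase with ⟨hs₁, hs₂⟩ | ⟨hs₁, hs₂, hsmall⟩
  · subst hs₁; subst hs₂
    have hres : resonance m M 1 (-1) ξ₁ ξ₂ = jb m d + jb M ξ₁ + jb M ξ₂ := by
      simp only [resonance, ← hd]; ring
    rw [hres, abs_of_nonneg (by
      have := jb_nonneg m d; have := jb_nonneg M ξ₁; have := jb_nonneg M ξ₂; linarith)]
    have h1 : a * max (jb 1 d) (max (jb 1 ξ₁) (jb 1 ξ₂))
        ≤ a * (jb 1 d + jb 1 ξ₁ + jb 1 ξ₂) :=
      mul_le_mul_of_nonneg_left hmax ha0.le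
    have hmx : 0 ≤ max (jb 1 d) (max (jb 1 ξ₁) (jb 1 ξ₂)) :=
      le_trans (jb_nonneg 1 d) (le_max_left _ _)
    nlinarith
  · subst hs₁; subst hs₂
    set N := min (jb M ξ₁) (jb M ξ₂) with hN
    have hN0 : 0 ≤ N := le_min (jb_nonneg _ _) (jb_nonneg _ _)
    have hpow : (2 : ℝ) ^ (-10 : ℤ) = 1 / 1024 := by norm_num
    rw [hpow] at hsmall
    have hN1 : N ≤ jb M ξ₁ := min_le_left _ _
    have hN2 : N ≤ jb M ξ₂ := min_le_right _ _
    -- jb m d is small, resonance is negative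
    have hres : resonance m M (-1) 1 ξ₁ ξ₂ = jb m d - jb M ξ₁ - jb M ξ₂ := by
      simp only [resonance, ← hd]; ring
    have hresneg : resonance m M (-1) 1 ξ₁ ξ₂ ≤ 0 := by rw [hres]; nlinarith
    rw [abs_of_nonpos hresneg, hres]
    -- each jb M ξᵢ ≤ N + ‖d‖ ≤ N + jb m d ≤ 2N
    have hnd : ‖d‖ ≤ jb m d := norm_le_jb m d
    have hb1 : jb M ξ₁ ≤ N + jb m d := by
      rcases le_total (jb M ξ₁) (jb M ξ₂) with h | h
      · have : N = jb M ξ₁ := by rw [hN, min_eq_left h]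
        linarith [jb_nonneg m d]
      · have hNe : N = jb M ξ₂ := by rw [hN, min_eq_right h]
        have := jb_lip M ξ₁ ξ₂
        rw [← hd] at this
        linarith
    have hb2 : jb M ξ₂ ≤ N + jb m d := by
      rcases le_total (jb M ξ₂) (jb M ξ₁) with h | h
      · have : N = jb M ξ₂ := by rw [hN, min_eq_right h]
        linarith [jb_nonneg m d]
      · have hNe : N = jb M ξ₁ := by rw [hN, min_eq_left h]
        have := jb_lip M ξ₂ ξ₁
        have hnn : ‖ξ₂ - ξ₁‖ = ‖d‖ := by rw [hd, norm_sub_rev]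
        rw [hnn] at this
        linarith
    -- bound each 1-bracket by (2/a) N
    have hy2 : a * jb 1 ξ₁ ≤ 2 * N := by linarith
    have hz2 : a * jb 1 ξ₂ ≤ 2 * N := by linarith
    have hx2 : a * jb 1 d ≤ 2 * N := by linarith
    have hmaxb : a * max (jb 1 d) (max (jb 1 ξ₁) (jb 1 ξ₂)) ≤ 2 * N := by
      rcases max_cases (jb 1 d) (max (jb 1 ξ₁) (jb 1 ξ₂)) with ⟨h, _⟩ | ⟨h, _⟩
      · rw [h]; exact hx2
      · rw [h]
        rcases max_cases (jb 1 ξ₁) (jb 1 ξ₂) with ⟨h', _⟩ | ⟨h', _⟩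
        · rw [h']; exact hy2
        · rw [h']; exact hz2
    -- |μ| ≥ 2N - jb m d ≥ 2N - N/1024 ≥ N
    have hgoal : a / 2 * max (jb 1 d) (max (jb 1 ξ₁) (jb 1 ξ₂)) =
        a * max (jb 1 d) (max (jb 1 ξ₁) (jb 1 ξ₂)) / 2 := by ring
    rw [hgoal]
    linarith
end
end

section
/- Let m, M > 0 with 2M > m. There exists a constant c > 0, depending only on m and M, such that for all nonzero ξ₁, ξ₂ ∈ ℝ² and all signs s₁, s₂ ∈ {+1, −1}, if either (a) s₁ = s₂, or (b) s₁ = −1, s₂ = +1 and ⟨ξ₁ − ξ₂⟩_m ≥ 2^{−10}·min(⟨ξ₁⟩_M, ⟨ξ₂⟩_M), then |μ^{s₁,s₂}(ξ₁, ξ₂)| ≥ c·(⟨ξ₁⟩·⟨ξ₂⟩/⟨ξ₁ − ξ₂⟩)·∠(s₁ξ₁, s₂ξ₂)². -/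
/-!
Write `a = |ξ₁|`, `b = |ξ₂|`, `d = |ξ₁ - ξ₂|` and `p = ⟪ξ₁, ξ₂⟫`. Jordan's inequality
`θ² ≤ (π²/2)(1 - cos θ)` bounds `ab·∠²` by a multiple of `ab ∓ p`, and `⟨x⟩ ≤ 2 max(x, 1)`, so it
suffices to bound `|μ|·ab·⟨d⟩` from below by a multiple of `max(a,1)·max(b,1)·(ab ∓ p)`.

Multiplying `μ` by a conjugate turns it into a polynomial quantity. For equal signs,
`μ·(⟨d⟩_m - ⟨a⟩_M + ⟨b⟩_M) = m² + d² - (⟨a⟩_M - ⟨b⟩_M)² ≥ m² + 2(ab - p)` because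
`|⟨a⟩_M - ⟨b⟩_M| ≤ |a - b|`. For `s₁ = -1`, `s₂ = 1`,
`-μ·(⟨a⟩_M + ⟨b⟩_M + ⟨d⟩_m) = 2M² - m² + 2p + 2⟨a⟩_M⟨b⟩_M ≥ 4M² - m² + 2(ab + p)`, which is
positive as `2M > m`, and the lower bound on `⟨d⟩_m` makes the conjugate factor `O(⟨d⟩)`.
This settles bounded frequencies and two frequencies `≥ 1`. When one frequency is below `1` and
the other large, `|μ|` is bounded below directly: by `a`, by `⟨a⟩_M - a ≳ M²/(M + 2)`, or through
`⟨a⟩_M⟨b⟩_M - ab ≥ a (⟨b⟩_M - b)`.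
-/

noncomputable section

open Real InnerProductGeometry

def bracket (M x : ℝ) : ℝ := √(M ^ 2 + x ^ 2)

section Bracket

variable {M x y : ℝ}

lemma bracket_nonneg (M x : ℝ) : 0 ≤ bracket M x := sqrt_nonneg _

lemma sq_bracket (M x : ℝ) : bracket M x ^ 2 = M ^ 2 + x ^ 2 := sq_sqrt (by positivity)

lemma le_bracket (M x : ℝ) : x ≤ bracket M x := le_sqrt_of_sq_le (by nlinarith)

lemma le_bracket_left (M x : ℝ) : M ≤ bracket M x := le_sqrt_of_sq_le (by nlinarith)

lemma one_le_bracket_one (x : ℝ) : 1 ≤ bracket 1 x := le_bracket_left 1 x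

lemma bracket_le_add (hM : 0 ≤ M) (hx : 0 ≤ x) : bracket M x ≤ M + x :=
  sqrt_le_iff.mpr ⟨by positivity, by nlinarith⟩

lemma bracket_le_bracket (hx : 0 ≤ x) (hxy : x ≤ y) : bracket M x ≤ bracket M y :=
  sqrt_le_sqrt (by nlinarith)

lemma bracket_le_bracket_add_abs_sub (M x y : ℝ) : bracket M x ≤ bracket M y + |x - y| := by
  have hy : y * (x - y) ≤ bracket M y * |x - y| :=
    (le_abs_self _).trans (by rw [abs_mul]; gcongr; exact abs_le_sqrt (by nlinarith))
  refine sqrt_le_iff.mpr ⟨add_nonneg (bracket_nonneg M y) (abs_nonneg _), ?_⟩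
  nlinarith [sq_bracket M y, sq_abs (x - y)]

lemma abs_bracket_sub_bracket_le (M x y : ℝ) : |bracket M x - bracket M y| ≤ |x - y| :=
  abs_sub_le_iff.mpr ⟨by linarith [bracket_le_bracket_add_abs_sub M x y],
    by linarith [bracket_le_bracket_add_abs_sub M y x, abs_sub_comm x y]⟩

lemma mul_add_sq_le_bracket_mul_bracket (M x y : ℝ) :
    x * y + M ^ 2 ≤ bracket M x * bracket M y := by
  rw [bracket, bracket, ← sqrt_mul (by positivity)]
  exact le_sqrt_of_sq_le (by nlinarith [sq_nonneg (M * x - M * y)])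

lemma bracket_le_max_one_mul (hM : 0 ≤ M) (x : ℝ) : bracket M x ≤ max M 1 * bracket 1 x := by
  rw [bracket, bracket, ← sqrt_sq (by positivity : 0 ≤ max M 1), ← sqrt_mul (sq_nonneg _)]
  have hM1 : M ^ 2 ≤ max M 1 ^ 2 := pow_le_pow_left₀ hM (le_max_left M 1) 2
  have h11 : 1 ≤ max M 1 ^ 2 := one_le_pow₀ (le_max_right M 1)
  exact sqrt_le_sqrt (by nlinarith [mul_le_mul_of_nonneg_right h11 (sq_nonneg x)])

lemma bracket_one_le_two_mul_max (hx : 0 ≤ x) : bracket 1 x ≤ 2 * max x 1 :=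
  sqrt_le_iff.mpr ⟨by positivity, by nlinarith [le_max_left x 1, le_max_right x 1]⟩

lemma bracket_mul_le (M : ℝ) (hx : 0 ≤ x) : bracket M x * x ≤ x ^ 2 + M ^ 2 / 2 := by
  rw [bracket, ← sqrt_sq hx, ← sqrt_mul (by positivity), sqrt_sq hx]
  exact sqrt_le_iff.mpr ⟨by positivity, by nlinarith [sq_nonneg (M ^ 2)]⟩

lemma div_le_bracket_sub (hM : 0 < M) (hx : 0 ≤ x) (hx1 : x ≤ 1) :
    M ^ 2 / (M + 2) ≤ bracket M x - x := by
  have hsum : bracket M x + x ≤ M + 2 := by linarith [bracket_le_add hM.le hx]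
  have hpos : 0 < bracket M x + x := by linarith [le_bracket_left M x]
  calc M ^ 2 / (M + 2) ≤ M ^ 2 / (bracket M x + x) := by gcongr
    _ = bracket M x - x := by
      rw [div_eq_iff hpos.ne']; linear_combination (-1 : ℝ) * sq_bracket M x

end Bracket

section Angle

variable {V : Type*} [NormedAddCommGroup V] [InnerProductSpace ℝ V]

lemma sq_le_mul_one_sub_cos {θ : ℝ} (h0 : 0 ≤ θ) (hπ : θ ≤ π) :
    θ ^ 2 ≤ π ^ 2 / 2 * (1 - cos θ) := by
  have hjordan := cos_le_one_sub_mul_cos_sq (by rwa [abs_of_nonneg h0] : |θ| ≤ π)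
  have hπ2 : 0 < π ^ 2 := by positivity
  calc θ ^ 2 = π ^ 2 / 2 * (2 / π ^ 2 * θ ^ 2) := by field_simp
    _ ≤ π ^ 2 / 2 * (1 - cos θ) := by gcongr; linarith

lemma sq_angle_mul_le (x y : V) :
    angle x y ^ 2 * (‖x‖ * ‖y‖) ≤ π ^ 2 / 2 * (‖x‖ * ‖y‖ - inner ℝ x y) := by
  rw [← cos_angle_mul_norm_mul_norm]
  calc angle x y ^ 2 * (‖x‖ * ‖y‖)
      ≤ π ^ 2 / 2 * (1 - cos (angle x y)) * (‖x‖ * ‖y‖) := by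
        gcongr; exact sq_le_mul_one_sub_cos (angle_nonneg x y) (angle_le_pi x y)
    _ = _ := by ring

lemma mul_sq_angle_le_of_mul_le {x y : V} (hx : x ≠ 0) (hy : y ≠ 0) {c ν e : ℝ} (hc : 0 ≤ c)
    (h : c * (max ‖x‖ 1 * max ‖y‖ 1) * (‖x‖ * ‖y‖ - inner ℝ x y) ≤
      ν * (‖x‖ * ‖y‖) * bracket 1 e) :
    c / (2 * π ^ 2) * (bracket 1 ‖x‖ * bracket 1 ‖y‖ / bracket 1 e) * angle x y ^ 2 ≤ ν := by
  have hn : 0 < ‖x‖ * ‖y‖ := by positivity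
  have he : 0 < bracket 1 e := one_pos.trans_le (one_le_bracket_one e)
  have hxy : bracket 1 ‖x‖ * bracket 1 ‖y‖ ≤ 4 * (max ‖x‖ 1 * max ‖y‖ 1) := by
    nlinarith [bracket_one_le_two_mul_max (norm_nonneg x),
      bracket_one_le_two_mul_max (norm_nonneg y), bracket_nonneg 1 ‖x‖, bracket_nonneg 1 ‖y‖]
  refine le_of_mul_le_mul_right ?_ (mul_pos hn he)
  calc c / (2 * π ^ 2) * (bracket 1 ‖x‖ * bracket 1 ‖y‖ / bracket 1 e) * angle x y ^ 2
        * (‖x‖ * ‖y‖ * bracket 1 e)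
      = c / (2 * π ^ 2) * (bracket 1 ‖x‖ * bracket 1 ‖y‖) * (angle x y ^ 2 * (‖x‖ * ‖y‖)) := by
        field_simp
    _ ≤ c / (2 * π ^ 2) * (4 * (max ‖x‖ 1 * max ‖y‖ 1)) *
          (π ^ 2 / 2 * (‖x‖ * ‖y‖ - inner ℝ x y)) := by
        gcongr c / (2 * π ^ 2) * ?_ * ?_
        exact sq_angle_mul_le x y
    _ = c * (max ‖x‖ 1 * max ‖y‖ 1) * (‖x‖ * ‖y‖ - inner ℝ x y) := by
        field_simp; ring
    _ ≤ ν * (‖x‖ * ‖y‖ * bracket 1 e) := by linarith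

end Angle

/- In the real-variable lemmas `a`, `b`, `d`, `p` stand for `|ξ₁|`, `|ξ₂|`, `|ξ₁ - ξ₂|` and
`⟪ξ₁, ξ₂⟫`, whence the hypotheses `d ^ 2 = a ^ 2 - 2 * p + b ^ 2` and `|p| ≤ a * b`. -/
def sameSignResonance (m M a b d : ℝ) : ℝ := bracket m d + bracket M a - bracket M b

def oppSignResonance (m M a b d : ℝ) : ℝ := bracket M a + bracket M b - bracket m d

section SameSign

variable {m M a b d p c : ℝ}

lemma sq_add_two_mul_le_sameSignResonance (hm : 0 ≤ m) (hd : 0 ≤ d)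
    (hrel : d ^ 2 = a ^ 2 - 2 * p + b ^ 2) (hp : |p| ≤ a * b) :
    m ^ 2 + 2 * (a * b - p) ≤ 2 * max m 1 * (sameSignResonance m M a b d * bracket 1 d) := by
  have hp' := (abs_le.mp hp).2
  have had : |a - b| ≤ d := abs_le_of_sq_le_sq (by nlinarith) hd
  set u := bracket M a - bracket M b
  have hu : |u| ≤ |a - b| := abs_bracket_sub_bracket_le M a b
  have hdJ := le_bracket m d
  have hν : 0 ≤ bracket m d + u := by linarith [neg_abs_le u]
  have hprod : (bracket m d + u) * (bracket m d - u) = m ^ 2 + d ^ 2 - u ^ 2 := by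
    linear_combination sq_bracket m d
  have hu2 : u ^ 2 ≤ (a - b) ^ 2 := sq_le_sq.mpr hu
  have hκ := bracket_le_max_one_mul hm d
  have hsame : sameSignResonance m M a b d = bracket m d + u := by
    simp only [sameSignResonance, u]; ring
  rw [hsame]
  nlinarith [mul_le_mul_of_nonneg_left (show bracket m d - u ≤ 2 * bracket m d by
    linarith [le_abs_self u]) hν, mul_le_mul_of_nonneg_left hκ hν]

lemma mul_le_sameSignResonance_of_le (hm : 0 ≤ m) (ha : 0 ≤ a) (hb : 0 ≤ b) (hd : 0 ≤ d)
    (hrel : d ^ 2 = a ^ 2 - 2 * p + b ^ 2) (hp : |p| ≤ a * b) {R : ℝ} (hR : 1 ≤ R)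
    (haR : a ≤ R) (hbR : b ≤ R) (hc0 : 0 ≤ c) (hc : c ≤ m ^ 2 / (4 * max m 1 * R ^ 2)) :
    c * (max a 1 * max b 1) * (a * b - p) ≤
      sameSignResonance m M a b d * (a * b) * bracket 1 d := by
  have hkey := sq_add_two_mul_le_sameSignResonance (M := M) hm hd hrel hp
  obtain ⟨hp₁, hp₂⟩ := abs_le.mp hp
  have hκ : 0 < max m 1 := lt_max_of_lt_right one_pos
  have hAB : max a 1 * max b 1 ≤ R ^ 2 := by
    rw [sq]; exact mul_le_mul (max_le haR hR) (max_le hbR hR) (by positivity) (by linarith)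
  have hcR : c * (4 * max m 1 * R ^ 2) ≤ m ^ 2 := (le_div_iff₀ (by positivity)).mp hc
  have hab : 0 ≤ a * b := mul_nonneg ha hb
  apply le_of_mul_le_mul_left _ (by positivity : 0 < 2 * max m 1)
  calc 2 * max m 1 * (c * (max a 1 * max b 1) * (a * b - p))
      ≤ 2 * max m 1 * (c * R ^ 2 * (2 * (a * b))) := by gcongr; linarith
    _ = c * (4 * max m 1 * R ^ 2) * (a * b) := by ring
    _ ≤ (m ^ 2 + 2 * (a * b - p)) * (a * b) := by gcongr; linarith
    _ ≤ _ := by nlinarith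

lemma mul_le_sameSignResonance_of_one_le (hm : 0 ≤ m) (ha : 1 ≤ a) (hb : 1 ≤ b) (hd : 0 ≤ d)
    (hrel : d ^ 2 = a ^ 2 - 2 * p + b ^ 2) (hp : |p| ≤ a * b) (hc : c ≤ 1 / (2 * max m 1)) :
    c * (max a 1 * max b 1) * (a * b - p) ≤
      sameSignResonance m M a b d * (a * b) * bracket 1 d := by
  have hkey := sq_add_two_mul_le_sameSignResonance (M := M) hm hd hrel hp
  have hp₂ := (abs_le.mp hp).2
  have hκ : 0 < max m 1 := lt_max_of_lt_right one_pos
  have hcκ : c * (2 * max m 1) ≤ 1 := (le_div_iff₀ (by positivity)).mp hc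
  have hab : 0 ≤ a * b := by nlinarith
  rw [max_eq_left ha, max_eq_left hb]
  apply le_of_mul_le_mul_left _ (by positivity : 0 < 2 * max m 1)
  calc 2 * max m 1 * (c * (a * b) * (a * b - p))
      = c * (2 * max m 1) * ((a * b - p) * (a * b)) := by ring
    _ ≤ 1 * ((a * b - p) * (a * b)) := by gcongr
    _ ≤ (m ^ 2 + 2 * (a * b - p)) * (a * b) := by nlinarith
    _ ≤ _ := by nlinarith

lemma mul_le_sameSignResonance_of_large_small (hM : 0 ≤ M) (ha : M + 2 ≤ a) (hb : 0 ≤ b)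
    (hb1 : b ≤ 1) (hd : 0 ≤ d) (hrel : d ^ 2 = a ^ 2 - 2 * p + b ^ 2) (hp : |p| ≤ a * b)
    (hc : c ≤ 1 / 2) :
    c * (max a 1 * max b 1) * (a * b - p) ≤
      sameSignResonance m M a b d * (a * b) * bracket 1 d := by
  obtain ⟨hp₁, hp₂⟩ := abs_le.mp hp
  have hda : a - b ≤ d := abs_le.mp (abs_le_of_sq_le_sq (by nlinarith) hd) |>.2
  have hν : a ≤ sameSignResonance m M a b d := by
    simp only [sameSignResonance]
    linarith [le_bracket m d, le_bracket M a, bracket_le_add hM hb]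
  have hab : 0 ≤ a * b := by nlinarith
  rw [max_eq_left (by linarith), max_eq_right hb1]
  calc c * (a * 1) * (a * b - p) ≤ 1 / 2 * a * (2 * (a * b)) := by
        gcongr <;> linarith
    _ = a * (a * b) * 1 := by ring
    _ ≤ _ := by
      gcongr
      · exact mul_nonneg (by linarith) hab
      · exact one_le_bracket_one d

lemma mul_le_sameSignResonance_of_small_large (hM : 0 < M) (ha : 0 ≤ a) (ha1 : a ≤ 1)
    (hb : M + 2 ≤ b) (hd : 0 ≤ d) (hrel : d ^ 2 = a ^ 2 - 2 * p + b ^ 2) (hp : |p| ≤ a * b)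
    (hc0 : 0 ≤ c) (hc : c ≤ M ^ 2 / (M + 2) / 8) :
    c * (max a 1 * max b 1) * (a * b - p) ≤
      sameSignResonance m M a b d * (a * b) * bracket 1 d := by
  obtain ⟨hp₁, hp₂⟩ := abs_le.mp hp
  set δ := M ^ 2 / (M + 2)
  have hδ : δ * (M + 2) = M ^ 2 := div_mul_cancel₀ _ (by positivity)
  have hb0 : 0 ≤ b := by linarith
  have hbd : b ^ 2 - p ≤ b * d := by
    refine (le_abs_self _).trans (abs_le_of_sq_le_sq ?_ (by positivity))
    rw [mul_pow, hrel]
    nlinarith [sq_le_sq' hp₁ hp₂]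
  have hν : δ / 2 ≤ sameSignResonance m M a b d := by
    have hδa := div_le_bracket_sub hM ha ha1
    have hbM := bracket_mul_le M hb0
    have hdJ := le_bracket m d
    apply le_of_mul_le_mul_right _ (by linarith : 0 < b)
    simp only [sameSignResonance]
    nlinarith [mul_le_mul_of_nonneg_right hdJ hb0, mul_le_mul_of_nonneg_right hδa hb0]
  have hdb : b / 2 ≤ bracket 1 d := by
    have hda : b - a ≤ d := by
      linarith [(abs_le.mp (abs_le_of_sq_le_sq (by nlinarith) hd : |a - b| ≤ d)).1]
    linarith [le_bracket 1 d]
  have hab : 0 ≤ a * b := by nlinarith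
  rw [max_eq_right ha1, max_eq_left (by linarith)]
  calc c * (1 * b) * (a * b - p) ≤ δ / 8 * (1 * b) * (2 * (a * b)) := by
        gcongr; linarith
    _ = δ / 2 * (a * b) * (b / 2) := by ring
    _ ≤ _ := by gcongr; nlinarith [div_nonneg (sq_nonneg M) (by linarith : (0:ℝ) ≤ M + 2)]

lemma exists_mul_le_sameSignResonance (hm : 0 < m) (hM : 0 < M) :
    ∃ c > 0, ∀ a b d p : ℝ, 0 ≤ a → 0 ≤ b → 0 ≤ d → d ^ 2 = a ^ 2 - 2 * p + b ^ 2 →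
      |p| ≤ a * b → c * (max a 1 * max b 1) * (a * b - p) ≤
        sameSignResonance m M a b d * (a * b) * bracket 1 d := by
  set R := M + 2
  have hR : 1 ≤ R := by linarith
  refine ⟨min (min (m ^ 2 / (4 * max m 1 * R ^ 2)) (1 / (2 * max m 1)))
    (min (1 / 2) (M ^ 2 / (M + 2) / 8)), by positivity, ?_⟩
  intro a b d p ha hb hd hrel hp
  have hc0 : 0 ≤ min (min (m ^ 2 / (4 * max m 1 * R ^ 2)) (1 / (2 * max m 1)))
    (min (1 / 2) (M ^ 2 / (M + 2) / 8)) := by positivity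
  by_cases hbdd : a ≤ R ∧ b ≤ R
  · exact mul_le_sameSignResonance_of_le hm.le ha hb hd hrel hp hR hbdd.1 hbdd.2 hc0
      ((min_le_left _ _).trans (min_le_left _ _))
  by_cases hone : 1 ≤ a ∧ 1 ≤ b
  · exact mul_le_sameSignResonance_of_one_le hm.le hone.1 hone.2 hd hrel hp
      ((min_le_left _ _).trans (min_le_right _ _))
  rcases le_or_gt a R with haR | haR
  · have hbR : R < b := not_le.mp fun h => hbdd ⟨haR, h⟩
    exact mul_le_sameSignResonance_of_small_large hM ha
      (not_le.mp fun h => hone ⟨h, by linarith⟩).le hbR.le hd hrel hp hc0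
      ((min_le_right _ _).trans (min_le_right _ _))
  · exact mul_le_sameSignResonance_of_large_small hM.le haR.le hb
      (not_le.mp fun h => hone ⟨by linarith, h⟩).le hd hrel hp
      ((min_le_right _ _).trans (min_le_left _ _))

end SameSign

section OppSign

variable {m M a b d p c : ℝ}

lemma oppSignResonance_mul_eq (hrel : d ^ 2 = a ^ 2 - 2 * p + b ^ 2) :
    oppSignResonance m M a b d * (bracket M a + bracket M b + bracket m d) =
      2 * M ^ 2 - m ^ 2 + 2 * p + 2 * (bracket M a * bracket M b) := by
  simp only [oppSignResonance]
  linear_combination sq_bracket M a + sq_bracket M b - sq_bracket m d - hrel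

lemma le_oppSignResonance_mul (hm : 0 ≤ m) (hmM : m < 2 * M) (hd : 0 ≤ d)
    (hrel : d ^ 2 = a ^ 2 - 2 * p + b ^ 2) (hp : |p| ≤ a * b)
    (hcond : bracket M b ≤ 1024 * bracket m d) :
    2 * M ^ 2 - m ^ 2 + 2 * p + 2 * (bracket M a * bracket M b) ≤
      2050 * max m 1 * (oppSignResonance m M a b d * bracket 1 d) := by
  obtain ⟨hp₁, hp₂⟩ := abs_le.mp hp
  set S := bracket M a + bracket M b + bracket m d
  have hS : 0 < S := by
    linarith [le_bracket_left M a, le_bracket_left M b, bracket_nonneg m d]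
  have hprod := oppSignResonance_mul_eq (m := m) (M := M) hrel
  have hν : 0 ≤ oppSignResonance m M a b d := by
    refine le_of_mul_le_mul_right ?_ hS
    rw [zero_mul, hprod]
    nlinarith [mul_add_sq_le_bracket_mul_bracket M a b]
  have hda : |a - b| ≤ d := abs_le_of_sq_le_sq (by nlinarith) hd
  -- `⟨a⟩_M ≤ ⟨b⟩_M + d`, so `S ≤ 2⟨b⟩_M + 2⟨d⟩_m ≤ 2050⟨d⟩_m`
  have hSd : S ≤ 2050 * bracket m d := by
    linarith [bracket_le_bracket_add_abs_sub M a b, le_bracket m d]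
  rw [← hprod]
  calc oppSignResonance m M a b d * S
      ≤ oppSignResonance m M a b d * (2050 * (max m 1 * bracket 1 d)) := by
        gcongr; linarith [bracket_le_max_one_mul hm d]
    _ = _ := by ring

lemma mul_le_oppSignResonance_of_one_le (hm : 0 ≤ m) (hmM : m < 2 * M) (ha1 : 1 ≤ a)
    (hb1 : 1 ≤ b) (hp : |p| ≤ a * b)
    (hkey : 2 * M ^ 2 - m ^ 2 + 2 * p + 2 * (bracket M a * bracket M b) ≤
      2050 * max m 1 * (oppSignResonance m M a b d * bracket 1 d))
    (hc : c ≤ 1 / (1025 * max m 1)) :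
    c * (max a 1 * max b 1) * (a * b + p) ≤
      oppSignResonance m M a b d * (a * b) * bracket 1 d := by
  have hp₁ := (abs_le.mp hp).1
  have hκ : 0 < max m 1 := lt_max_of_lt_right one_pos
  have hcκ : c * (1025 * max m 1) ≤ 1 := (le_div_iff₀ (by positivity)).mp hc
  have hab : 0 ≤ a * b := by nlinarith
  have hJJ := mul_add_sq_le_bracket_mul_bracket M a b
  rw [max_eq_left ha1, max_eq_left hb1]
  apply le_of_mul_le_mul_left _ (by positivity : 0 < 2050 * max m 1)
  calc 2050 * max m 1 * (c * (a * b) * (a * b + p))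
      = c * (1025 * max m 1) * (2 * (a * b + p) * (a * b)) := by ring
    _ ≤ 1 * (2 * (a * b + p) * (a * b)) := by gcongr; nlinarith
    _ ≤ (2 * M ^ 2 - m ^ 2 + 2 * p + 2 * (bracket M a * bracket M b)) * (a * b) := by
        rw [one_mul]; gcongr ?_ * _; nlinarith
    _ ≤ _ := by nlinarith

lemma mul_le_oppSignResonance_of_le (ha : 0 ≤ a) (hb : 0 ≤ b) (hb1 : b ≤ 1) (hp : |p| ≤ a * b)
    {Q : ℝ} (hQ : 1 ≤ Q) (haQ : a ≤ Q)
    (hkey : 2 * M ^ 2 - m ^ 2 + 2 * p + 2 * (bracket M a * bracket M b) ≤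
      2050 * max m 1 * (oppSignResonance m M a b d * bracket 1 d))
    (hc0 : 0 ≤ c) (hc : c ≤ (4 * M ^ 2 - m ^ 2) / (4100 * max m 1 * Q)) :
    c * (max a 1 * max b 1) * (a * b + p) ≤
      oppSignResonance m M a b d * (a * b) * bracket 1 d := by
  obtain ⟨hp₁, hp₂⟩ := abs_le.mp hp
  have hκ : 0 < max m 1 := lt_max_of_lt_right one_pos
  have hcQ : c * (4100 * max m 1 * Q) ≤ 4 * M ^ 2 - m ^ 2 :=
    (le_div_iff₀ (by positivity)).mp hc
  have hab : 0 ≤ a * b := mul_nonneg ha hb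
  have hJJ := mul_add_sq_le_bracket_mul_bracket M a b
  rw [max_eq_right hb1, mul_one]
  apply le_of_mul_le_mul_left _ (by positivity : 0 < 2050 * max m 1)
  calc 2050 * max m 1 * (c * max a 1 * (a * b + p))
      ≤ 2050 * max m 1 * (c * Q * (2 * (a * b))) := by
        gcongr 2050 * max m 1 * (c * ?_ * ?_)
        · linarith
        · exact max_le haQ hQ
        · linarith
    _ = c * (4100 * max m 1 * Q) * (a * b) := by ring
    _ ≤ (4 * M ^ 2 - m ^ 2) * (a * b) := by gcongr
    _ ≤ (2 * M ^ 2 - m ^ 2 + 2 * p + 2 * (bracket M a * bracket M b)) * (a * b) := by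
        gcongr ?_ * _; nlinarith
    _ ≤ _ := by nlinarith

lemma mul_le_oppSignResonance_of_large_small (hM : 0 < M) (ha1 : 1 ≤ a) (hb : 0 ≤ b)
    (hb1 : b ≤ 1) (hp : |p| ≤ a * b) (hma : m ^ 2 ≤ M ^ 2 / (M + 2) * a)
    (hkey : 2 * M ^ 2 - m ^ 2 + 2 * p + 2 * (bracket M a * bracket M b) ≤
      2050 * max m 1 * (oppSignResonance m M a b d * bracket 1 d))
    (hc0 : 0 ≤ c) (hc : c ≤ M ^ 2 / (M + 2) / (4100 * max m 1)) :
    c * (max a 1 * max b 1) * (a * b + p) ≤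
      oppSignResonance m M a b d * (a * b) * bracket 1 d := by
  obtain ⟨hp₁, hp₂⟩ := abs_le.mp hp
  set β := M ^ 2 / (M + 2)
  have hκ : 0 < max m 1 := lt_max_of_lt_right one_pos
  have hcβ : c * (4100 * max m 1) ≤ β := (le_div_iff₀ (by positivity)).mp hc
  have hab : 0 ≤ a * b := by nlinarith
  have hJJ : β * a ≤ bracket M a * bracket M b - a * b := by
    have hβ := div_le_bracket_sub hM hb hb1
    nlinarith [le_bracket M a, le_bracket M b, mul_le_mul_of_nonneg_left hβ (by linarith : 0 ≤ a)]
  rw [max_eq_left ha1, max_eq_right hb1, mul_one]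
  apply le_of_mul_le_mul_left _ (by positivity : 0 < 2050 * max m 1)
  calc 2050 * max m 1 * (c * a * (a * b + p))
      ≤ 2050 * max m 1 * (c * a * (2 * (a * b))) := by gcongr; linarith
    _ = c * (4100 * max m 1) * (a * (a * b)) := by ring
    _ ≤ β * (a * (a * b)) := by gcongr
    _ = β * a * (a * b) := by ring
    _ ≤ (2 * M ^ 2 - m ^ 2 + 2 * p + 2 * (bracket M a * bracket M b)) * (a * b) := by
        gcongr ?_ * _; nlinarith
    _ ≤ _ := by nlinarith

lemma exists_mul_le_oppSignResonance (hm : 0 ≤ m) (hmM : m < 2 * M) :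
    ∃ c > 0, ∀ a b d p : ℝ, 0 ≤ b → b ≤ a → 0 ≤ d → d ^ 2 = a ^ 2 - 2 * p + b ^ 2 →
      |p| ≤ a * b → bracket M b ≤ 1024 * bracket m d →
      c * (max a 1 * max b 1) * (a * b + p) ≤
        oppSignResonance m M a b d * (a * b) * bracket 1 d := by
  have hM : 0 < M := by linarith
  have h4M : 0 < 4 * M ^ 2 - m ^ 2 := by nlinarith
  set β := M ^ 2 / (M + 2)
  have hβ : 0 < β := by positivity
  set Q := 1 + m ^ 2 / β
  have hQ : 1 ≤ Q := le_add_of_nonneg_right (by positivity)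
  refine ⟨min (min (1 / (1025 * max m 1)) ((4 * M ^ 2 - m ^ 2) / (4100 * max m 1 * Q)))
    (β / (4100 * max m 1)), by positivity, ?_⟩
  intro a b d p hb hba hd hrel hp hcond
  have hc0 : 0 ≤ min (min (1 / (1025 * max m 1)) ((4 * M ^ 2 - m ^ 2) / (4100 * max m 1 * Q)))
    (β / (4100 * max m 1)) := by positivity
  have hkey := le_oppSignResonance_mul hm hmM hd hrel hp hcond
  rcases le_total 1 b with hb1 | hb1
  · exact mul_le_oppSignResonance_of_one_le hm hmM (hb1.trans hba) hb1 hp hkey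
      ((min_le_left _ _).trans (min_le_left _ _))
  rcases le_total a Q with haQ | hQa
  · exact mul_le_oppSignResonance_of_le (hb.trans hba) hb hb1 hp hQ haQ hkey hc0
      ((min_le_left _ _).trans (min_le_right _ _))
  · have hma : m ^ 2 ≤ β * a := by
      calc m ^ 2 = β * (m ^ 2 / β) := by field_simp
        _ ≤ β * a := by gcongr; linarith
    exact mul_le_oppSignResonance_of_large_small hM (hQ.trans hQa) hb hb1 hp hma hkey hc0
      (min_le_right _ _)

end OppSign

lemma jb_sub_comm (M : ℝ) (ξ₁ ξ₂ : E2) : jb M (ξ₁ - ξ₂) = jb M (ξ₂ - ξ₁) := by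
  rw [jb, jb, norm_sub_rev]

def bracketRatio (ξ₁ ξ₂ : E2) : ℝ := jb 1 ξ₁ * jb 1 ξ₂ / jb 1 (ξ₁ - ξ₂)

lemma bracketRatio_nonneg (ξ₁ ξ₂ : E2) : 0 ≤ bracketRatio ξ₁ ξ₂ :=
  div_nonneg (mul_nonneg (sqrt_nonneg _) (sqrt_nonneg _)) (sqrt_nonneg _)

lemma bracketRatio_comm (ξ₁ ξ₂ : E2) : bracketRatio ξ₁ ξ₂ = bracketRatio ξ₂ ξ₁ := by
  rw [bracketRatio, bracketRatio, mul_comm, jb_sub_comm]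

lemma mul_bracketRatio_mono {c c' : ℝ} (h : c ≤ c') (ξ₁ ξ₂ : E2) (θ : ℝ) :
    c * bracketRatio ξ₁ ξ₂ * θ ^ 2 ≤ c' * bracketRatio ξ₁ ξ₂ * θ ^ 2 := by
  have := bracketRatio_nonneg ξ₁ ξ₂
  gcongr

lemma resonance_one_one (m M : ℝ) (ξ₁ ξ₂ : E2) :
    resonance m M 1 1 ξ₁ ξ₂ = sameSignResonance m M ‖ξ₁‖ ‖ξ₂‖ ‖ξ₁ - ξ₂‖ := by
  simp only [resonance, sameSignResonance, jb, bracket, one_mul]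

lemma neg_resonance_neg_one_one (m M : ℝ) (ξ₁ ξ₂ : E2) :
    -resonance m M (-1) 1 ξ₁ ξ₂ = oppSignResonance m M ‖ξ₁‖ ‖ξ₂‖ ‖ξ₁ - ξ₂‖ := by
  simp only [resonance, oppSignResonance, jb, bracket]; ring

lemma resonance_neg_neg (m M : ℝ) (ξ₁ ξ₂ : E2) :
    resonance m M (-1) (-1) ξ₁ ξ₂ = resonance m M 1 1 ξ₂ ξ₁ := by
  rw [resonance, resonance, jb_sub_comm]; ring

lemma resonance_neg_one_one_comm (m M : ℝ) (ξ₁ ξ₂ : E2) :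
    resonance m M (-1) 1 ξ₁ ξ₂ = resonance m M (-1) 1 ξ₂ ξ₁ := by
  rw [resonance, resonance, jb_sub_comm]; ring

lemma exists_mul_bracketRatio_le_resonance_one_one {m M : ℝ} (hm : 0 < m) (hM : 0 < M) :
    ∃ c > 0, ∀ ξ₁ ξ₂ : E2, ξ₁ ≠ 0 → ξ₂ ≠ 0 →
      c * bracketRatio ξ₁ ξ₂ * angle ξ₁ ξ₂ ^ 2 ≤ resonance m M 1 1 ξ₁ ξ₂ := by
  obtain ⟨c, hc, hbound⟩ := exists_mul_le_sameSignResonance hm hM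
  refine ⟨c / (2 * π ^ 2), by positivity, fun ξ₁ ξ₂ hξ₁ hξ₂ => ?_⟩
  rw [resonance_one_one]
  exact mul_sq_angle_le_of_mul_le hξ₁ hξ₂ hc.le (hbound _ _ _ _ (norm_nonneg _)
    (norm_nonneg _) (norm_nonneg _) (norm_sub_sq_real ξ₁ ξ₂) (abs_real_inner_le_norm ξ₁ ξ₂))

lemma exists_mul_bracketRatio_le_neg_resonance {m M : ℝ} (hm : 0 ≤ m) (hmM : m < 2 * M) :
    ∃ c > 0, ∀ ξ₁ ξ₂ : E2, ξ₁ ≠ 0 → ξ₂ ≠ 0 →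
      (2 : ℝ) ^ (-10 : ℤ) * min (jb M ξ₁) (jb M ξ₂) ≤ jb m (ξ₁ - ξ₂) →
      c * bracketRatio ξ₁ ξ₂ * angle (-ξ₁) ξ₂ ^ 2 ≤ -resonance m M (-1) 1 ξ₁ ξ₂ := by
  obtain ⟨c, hc, hbound⟩ := exists_mul_le_oppSignResonance hm hmM
  refine ⟨c / (2 * π ^ 2), by positivity, fun ξ₁ ξ₂ hξ₁ hξ₂ hcond => ?_⟩
  wlog h21 : ‖ξ₂‖ ≤ ‖ξ₁‖ generalizing ξ₁ ξ₂ with H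
  · rw [bracketRatio_comm, angle_neg_left, angle_comm, ← angle_neg_left,
      resonance_neg_one_one_comm]
    exact H ξ₂ ξ₁ hξ₂ hξ₁ (by rwa [min_comm, jb_sub_comm]) (le_of_not_ge h21)
  have hmin : min (jb M ξ₁) (jb M ξ₂) = jb M ξ₂ :=
    min_eq_right (bracket_le_bracket (norm_nonneg _) h21)
  rw [hmin, show (2 : ℝ) ^ (-10 : ℤ) = 1 / 1024 by norm_num] at hcond
  have hcond' : bracket M ‖ξ₂‖ ≤ 1024 * bracket m ‖ξ₁ - ξ₂‖ := by
    change jb M ξ₂ ≤ 1024 * jb m (ξ₁ - ξ₂); linarith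
  have key := hbound _ _ _ _ (norm_nonneg _) h21 (norm_nonneg _) (norm_sub_sq_real ξ₁ ξ₂)
    (abs_real_inner_le_norm ξ₁ ξ₂) hcond'
  rw [← norm_neg ξ₁, ← sub_neg_eq_add, ← inner_neg_left] at key
  have h := mul_sq_angle_le_of_mul_le (neg_ne_zero.mpr hξ₁) hξ₂ hc.le key
  rwa [norm_neg, ← neg_resonance_neg_one_one] at h

theorem stmt1 (m M : ℝ) (hm : 0 < m) (hM : 0 < M) (hmM : m < 2 * M) :
    ∃ c : ℝ, 0 < c ∧ ∀ (ξ₁ ξ₂ : E2) (s₁ s₂ : ℝ),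
      ξ₁ ≠ 0 → ξ₂ ≠ 0 →
      (s₁ = 1 ∨ s₁ = -1) → (s₂ = 1 ∨ s₂ = -1) →
      (s₁ = s₂ ∨
        (s₁ = -1 ∧ s₂ = 1 ∧
          (2 : ℝ) ^ (-10 : ℤ) * min (jb M ξ₁) (jb M ξ₂) ≤ jb m (ξ₁ - ξ₂))) →
      c * (jb 1 ξ₁ * jb 1 ξ₂ / jb 1 (ξ₁ - ξ₂)) *
          (InnerProductGeometry.angle (s₁ • ξ₁) (s₂ • ξ₂)) ^ 2 ≤
        |resonance m M s₁ s₂ ξ₁ ξ₂| := by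
  obtain ⟨c₁, hc₁, hsame⟩ := exists_mul_bracketRatio_le_resonance_one_one hm hM
  obtain ⟨c₂, hc₂, hopp⟩ := exists_mul_bracketRatio_le_neg_resonance hm.le hmM
  refine ⟨min c₁ c₂, lt_min hc₁ hc₂, fun ξ₁ ξ₂ s₁ s₂ hξ₁ hξ₂ hs₁ hs₂ hcase => ?_⟩
  change min c₁ c₂ * bracketRatio ξ₁ ξ₂ * _ ≤ _
  rcases hs₁ with rfl | rfl <;> rcases hs₂ with rfl | rfl
  · rw [one_smul, one_smul]
    exact (mul_bracketRatio_mono (min_le_left _ _) _ _ _).trans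
      ((hsame ξ₁ ξ₂ hξ₁ hξ₂).trans (le_abs_self _))
  · norm_num at hcase
  · have hcond : (2 : ℝ) ^ (-10 : ℤ) * min (jb M ξ₁) (jb M ξ₂) ≤ jb m (ξ₁ - ξ₂) := by
      rcases hcase with h | ⟨-, -, h⟩
      · norm_num at h
      · exact h
    rw [neg_one_smul, one_smul]
    exact (mul_bracketRatio_mono (min_le_right _ _) _ _ _).trans
      ((hopp ξ₁ ξ₂ hξ₁ hξ₂ hcond).trans (neg_le_abs _))
  · rw [neg_one_smul, neg_one_smul, angle_neg_neg, angle_comm, bracketRatio_comm,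
      resonance_neg_neg]
    exact (mul_bracketRatio_mono (min_le_left _ _) _ _ _).trans
      ((hsame ξ₂ ξ₁ hξ₂ hξ₁).trans (le_abs_self _))
end
end

section
/- Let m, M > 0 with 2M > m. There exists a constant c > 0, depending only on m and M, such that for all ξ₁, ξ₂ ∈ ℝ² and every choice of signs s₁, s₂ ∈ {+1, −1}, one has the non-resonance bound |μ^{s₁,s₂}(ξ₁, ξ₂)| ≥ c·max(⟨ξ₁ − ξ₂⟩^{-1}, ⟨ξ₁⟩^{-1}, ⟨ξ₂⟩^{-1}). -/
noncomputable section

private lemma aux_le (x y : ℝ) (hy : 0 ≤ y) (h : x ^ 2 ≤ y ^ 2) : x ≤ y := by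
  nlinarith [sq_nonneg (x - y), sq_nonneg (x + y)]

private lemma lem_base (k x r : ℝ) (hk : 0 ≤ k) (hx : 0 ≤ x) (hr : 0 ≤ r)
    (hr2 : r ^ 2 = k^2 + x^2) : k ≤ r ∧ x ≤ r :=
  ⟨aux_le _ _ hr (by nlinarith), aux_le _ _ hr (by nlinarith)⟩

private lemma lem_CL (k x C a L : ℝ) (hk : 0 ≤ k) (hx : 0 ≤ x) (ha : 0 ≤ a) (hL : 0 ≤ L)
    (ha2 : a ^ 2 = k^2 + x^2) (hL2 : L ^ 2 = 1 + x^2) (hC : k + 1 ≤ C) : a ≤ C * L := by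
  have hC0 : 0 ≤ C := by linarith
  have h1 : (k+1) ^ 2 ≤ C ^ 2 := by nlinarith
  exact aux_le _ _ (by positivity) (by nlinarith [h1, mul_le_mul_of_nonneg_right h1 (sq_nonneg x), hk, hx])

private lemma lem_bc (M p q t b c : ℝ) (hp : 0 ≤ p) (hq : 0 ≤ q) (ht : 0 ≤ t)
    (hb : 0 ≤ b) (hc : 0 ≤ c) (hb2 : b ^ 2 = M^2 + p^2) (hc2 : c ^ 2 = M^2 + q^2)
    (htr : p ≤ t + q) (hqc : q ≤ c) : b ≤ c + t := by
  exact aux_le _ _ (by positivity) (by nlinarith [mul_self_le_mul_self hp htr, mul_le_mul_of_nonneg_right hqc ht])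

private lemma lem_ab (m M t p q a b : ℝ) (hm : 0 < m) (hM : 0 < M)
    (ht : 0 ≤ t) (hp : 0 ≤ p) (hq : 0 ≤ q) (ha : 0 ≤ a) (hb : 0 ≤ b)
    (ha2 : a ^ 2 = m^2 + t^2) (hb2 : b ^ 2 = M^2 + p^2)
    (htr : t ≤ p + q) (hpb : p ≤ b) : a ≤ b + (m + M) + q := by
  refine aux_le _ _ (by positivity) ?_
  nlinarith [mul_self_le_mul_self ht htr, mul_le_mul_of_nonneg_right hpb hq,
    mul_nonneg (mul_nonneg hb (by linarith : (0:ℝ) ≤ m + M)) hq,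
    mul_nonneg (by linarith : (0:ℝ) ≤ m + M) hq]

private lemma lem_ba (m M t p q a b : ℝ) (hm : 0 < m) (hM : 0 < M)
    (ht : 0 ≤ t) (hp : 0 ≤ p) (hq : 0 ≤ q) (ha : 0 ≤ a) (hb : 0 ≤ b)
    (ha2 : a ^ 2 = m^2 + t^2) (hb2 : b ^ 2 = M^2 + p^2)
    (htr : p ≤ t + q) (hta : t ≤ a) : b ≤ a + (m + M) + q := by
  refine aux_le _ _ (by positivity) ?_
  nlinarith [mul_self_le_mul_self hp htr, mul_le_mul_of_nonneg_right hta hq,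
    mul_nonneg (mul_nonneg ha (by linarith : (0:ℝ) ≤ m + M)) hq,
    mul_nonneg (by linarith : (0:ℝ) ≤ m + M) hq]

private lemma lem_S (p q t L0 L1 L2 : ℝ) (hq : 0 ≤ q)
    (hL02 : L0 ^ 2 = 1 + t^2) (hL12 : L1 ^ 2 = 1 + p^2) (hL22 : L2 ^ 2 = 1 + q^2)
    (hqle : q ≤ p + t) : (L0 + L1 + L2) ^ 2 ≤ 12*(1 + p^2 + t^2) := by
  nlinarith [sq_nonneg (L0 - L1), sq_nonneg (L0 - L2), sq_nonneg (L1 - L2),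
    mul_self_le_mul_self hq hqle, sq_nonneg (p - t)]

private lemma lem_Pbound (m M ε p q t : ℝ) (hm : 0 < m) (hM : 0 < M)
    (hp : 0 ≤ p) (ht : 0 ≤ t) (hq : 0 ≤ q)
    (htr1 : q ≤ p + t) (htr2 : p ≤ t + q) (htr3 : t ≤ q + p)
    (hε3 : ε ≤ m^2*(4*M^2 - m^2))
    (hε1 : ε*(2*M^2) ≤ m^2*(4*M^2 - m^2))
    (hε2 : ε*(m^2+4*M^2) ≤ 4*M^2*(4*M^2 - m^2)) :
    ε*(1 + p^2 + t^2) ≤ 4*(m^2+t^2)*(M^2+p^2) - (m^2+t^2+p^2-q^2)^2 := by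
  have hM2 : (0:ℝ) < M^2 := pow_pos hM 2
  have hm2 : (0:ℝ) < m^2 := pow_pos hm 2
  have hkey : ε*(1 + p^2 + t^2) ≤ m^2*(4*M^2 - m^2) + 4*m^2*p^2 + 4*M^2*t^2 - 4*m^2*p*t := by
    have H5 : (0:ℝ) < 2*M^2*(m^2+4*M^2) := by nlinarith
    have H1 : (0:ℝ) ≤ (m^2*(4*M^2 - m^2) - ε*(2*M^2)) * ((m^2+4*M^2) * p^2) :=
      mul_nonneg (by linarith) (by positivity)
    have H2 : (0:ℝ) ≤ (4*M^2*(4*M^2 - m^2) - ε*(m^2+4*M^2)) * ((2*M^2) * t^2) :=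
      mul_nonneg (by linarith) (by positivity)
    have H3 : (0:ℝ) ≤ (m^2*(4*M^2 - m^2) - ε) * (2*M^2*(m^2+4*M^2)) :=
      mul_nonneg (by linarith) (by positivity)
    have H4 : (0:ℝ) ≤ m^2 * ((m^2+4*M^2)*p - 4*M^2*t)^2 := by positivity
    nlinarith [H1, H2, H3, H4, H5]
  have hv1 : t^2 + p^2 - q^2 ≤ 2*p*t := by nlinarith [sq_nonneg (p - t - q), sq_nonneg (p - t + q)]
  have hv2 : -(2*p*t) ≤ t^2 + p^2 - q^2 := by nlinarith [mul_self_le_mul_self hq htr1]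
  have hsq : (m^2 + (t^2+p^2-q^2))^2 ≤ (m^2 + 2*p*t)^2 := by
    have h1 : (0:ℝ) ≤ m^2 + 2*p*t - (m^2 + (t^2+p^2-q^2)) := by linarith
    have h2 : (0:ℝ) ≤ m^2 + 2*p*t + (m^2 + (t^2+p^2-q^2)) := by nlinarith [mul_nonneg hp ht]
    nlinarith [mul_nonneg h1 h2]
  nlinarith [hkey, hsq]

private lemma core (ε C S Li q2 q3 q4 am P : ℝ)
    (hε : 0 < ε) (hC : 0 < C) (hS : 3 ≤ S) (hLi : 1 ≤ Li)
    (ham : 0 ≤ am) (hq3 : 0 ≤ q3) (hq4 : 0 ≤ q4)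
    (hprod : am * q2 * q3 * q4 = P)
    (hP : ε / 12 * S ^ 2 ≤ P)
    (h2 : q2 ≤ 2 * C * S) (h3 : q3 ≤ 2 * C * S) (h4 : q4 ≤ 2 * C * Li) :
    ε / (96 * C ^ 3) ≤ am * Li := by
  have hS0 : (0:ℝ) < S := by linarith
  have hLi0 : (0:ℝ) < Li := by linarith
  have hCS : (0:ℝ) ≤ 2 * C * S := by positivity
  have hQ : q2 * q3 * q4 ≤ (2 * C * S) * ((2 * C * S) * (2 * C * Li)) := by
    calc q2 * q3 * q4 = q2 * (q3 * q4) := by ring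
    _ ≤ (2*C*S) * ((2*C*S) * (2*C*Li)) :=
        mul_le_mul h2 (mul_le_mul h3 h4 hq4 hCS) (by positivity) hCS
  have hP' : ε / 12 * S ^ 2 ≤ am * (8 * C ^ 3 * S ^ 2 * Li) := by
    calc ε / 12 * S ^ 2 ≤ P := hP
    _ = am * (q2 * q3 * q4) := by rw [← hprod]; ring
    _ ≤ am * ((2*C*S) * ((2*C*S) * (2*C*Li))) := mul_le_mul_of_nonneg_left hQ ham
    _ = am * (8 * C ^ 3 * S ^ 2 * Li) := by ring
  rw [div_le_iff₀ (by positivity)]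
  nlinarith [mul_pos hS0 hS0, sq_nonneg S, mul_nonneg ham hLi0.le]

private lemma combine (c am L0 L1 L2 : ℝ) (h0 : 1 ≤ L0) (h1 : 1 ≤ L1) (h2 : 1 ≤ L2)
    (g0 : c ≤ am * L0) (g1 : c ≤ am * L1) (g2 : c ≤ am * L2) :
    c * max L0⁻¹ (max L1⁻¹ L2⁻¹) ≤ am := by
  have p0 : (0:ℝ) < L0 := by linarith
  have p1 : (0:ℝ) < L1 := by linarith
  have p2 : (0:ℝ) < L2 := by linarith
  have e0 : c * L0⁻¹ ≤ am := by rw [← div_eq_mul_inv, div_le_iff₀ p0]; exact g0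
  have e1 : c * L1⁻¹ ≤ am := by rw [← div_eq_mul_inv, div_le_iff₀ p1]; exact g1
  have e2 : c * L2⁻¹ ≤ am := by rw [← div_eq_mul_inv, div_le_iff₀ p2]; exact g2
  rcases le_total L1⁻¹ L2⁻¹ with h | h
  · rw [max_eq_right h]
    rcases le_total L0⁻¹ L2⁻¹ with h' | h'
    · rw [max_eq_right h']; exact e2
    · rw [max_eq_left h']; exact e0
  · rw [max_eq_left h]
    rcases le_total L0⁻¹ L1⁻¹ with h' | h'
    · rw [max_eq_right h']; exact e1
    · rw [max_eq_left h']; exact e0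

set_option maxHeartbeats 1000000 in
private lemma nonres_real (m M : ℝ) (hm : 0 < m) (hM : 0 < M) (hmM : m < 2 * M) :
    ∃ c : ℝ, 0 < c ∧ ∀ t p q : ℝ, 0 ≤ t → 0 ≤ p → 0 ≤ q →
      t ≤ p + q → p ≤ t + q → q ≤ t + p →
      ∀ s₁ s₂ : ℝ, (s₁ = 1 ∨ s₁ = -1) → (s₂ = 1 ∨ s₂ = -1) →
      c * max (Real.sqrt (1 + t^2))⁻¹
          (max (Real.sqrt (1 + p^2))⁻¹ (Real.sqrt (1 + q^2))⁻¹) ≤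
        |Real.sqrt (m^2 + t^2) + s₁ * Real.sqrt (M^2 + p^2) - s₂ * Real.sqrt (M^2 + q^2)| := by
  have hδ : (0:ℝ) < 4*M^2 - m^2 := by nlinarith
  have hM2 : (0:ℝ) < M^2 := pow_pos hM 2
  have hm2 : (0:ℝ) < m^2 := pow_pos hm 2
  set C : ℝ := m + M + 2 with hCdef
  have hC : 0 < C := by rw [hCdef]; linarith
  have hC2 : 2 ≤ C := by rw [hCdef]; linarith
  set ε : ℝ := min (m^2*(4*M^2 - m^2))
    (min (m^2*(4*M^2 - m^2)/(2*M^2)) (4*M^2*(4*M^2 - m^2)/(m^2+4*M^2))) with hεdef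
  have hε : 0 < ε := by
    refine lt_min (mul_pos hm2 hδ) (lt_min (div_pos (mul_pos hm2 hδ) (by linarith))
      (div_pos (mul_pos (by linarith) hδ) (by linarith)))
  have hε3 : ε ≤ m^2*(4*M^2 - m^2) := min_le_left _ _
  have hε1 : ε*(2*M^2) ≤ m^2*(4*M^2 - m^2) := by
    have h : ε ≤ m^2*(4*M^2 - m^2)/(2*M^2) := by
      rw [hεdef]; exact le_trans (min_le_right _ _) (min_le_left _ _)
    calc ε*(2*M^2) ≤ m^2*(4*M^2 - m^2)/(2*M^2)*(2*M^2) := by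
          exact mul_le_mul_of_nonneg_right h (by positivity)
    _ = m^2*(4*M^2 - m^2) := by field_simp
  have hε2 : ε*(m^2+4*M^2) ≤ 4*M^2*(4*M^2 - m^2) := by
    have h : ε ≤ 4*M^2*(4*M^2 - m^2)/(m^2+4*M^2) := by
      rw [hεdef]; exact le_trans (min_le_right _ _) (min_le_right _ _)
    calc ε*(m^2+4*M^2) ≤ 4*M^2*(4*M^2 - m^2)/(m^2+4*M^2)*(m^2+4*M^2) := by
          exact mul_le_mul_of_nonneg_right h (by positivity)
    _ = 4*M^2*(4*M^2 - m^2) := by field_simp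
  have h96 : (0:ℝ) < 96 * C ^ 3 := by have := pow_pos hC 3; linarith
  refine ⟨ε / (96 * C ^ 3), div_pos hε h96, ?_⟩
  intro t p q ht hp hq htr1 htr2 htr3 s₁ s₂ hs₁ hs₂
  set a := Real.sqrt (m^2 + t^2) with hadef
  set b := Real.sqrt (M^2 + p^2) with hbdef
  set c := Real.sqrt (M^2 + q^2) with hcdef
  set L0 := Real.sqrt (1 + t^2) with hL0def
  set L1 := Real.sqrt (1 + p^2) with hL1def
  set L2 := Real.sqrt (1 + q^2) with hL2def
  have ha : 0 ≤ a := Real.sqrt_nonneg _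
  have hb : 0 ≤ b := Real.sqrt_nonneg _
  have hc : 0 ≤ c := Real.sqrt_nonneg _
  have hL0 : 0 ≤ L0 := Real.sqrt_nonneg _
  have hL1 : 0 ≤ L1 := Real.sqrt_nonneg _
  have hL2 : 0 ≤ L2 := Real.sqrt_nonneg _
  have ha2 : a ^ 2 = m^2 + t^2 := Real.sq_sqrt (by positivity)
  have hb2 : b ^ 2 = M^2 + p^2 := Real.sq_sqrt (by positivity)
  have hc2 : c ^ 2 = M^2 + q^2 := Real.sq_sqrt (by positivity)
  have hL02 : L0 ^ 2 = 1 + t^2 := Real.sq_sqrt (by positivity)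
  have hL12 : L1 ^ 2 = 1 + p^2 := Real.sq_sqrt (by positivity)
  have hL22 : L2 ^ 2 = 1 + q^2 := Real.sq_sqrt (by positivity)
  have hta : t ≤ a := (lem_base m t a hm.le ht ha ha2).2
  have hpb : p ≤ b := (lem_base M p b hM.le hp hb hb2).2
  have hqc : q ≤ c := (lem_base M q c hM.le hq hc hc2).2
  have hbase0 := lem_base 1 t L0 zero_le_one ht hL0 (by rw [hL02]; norm_num)
  have hbase1 := lem_base 1 p L1 zero_le_one hp hL1 (by rw [hL12]; norm_num)
  have hbase2 := lem_base 1 q L2 zero_le_one hq hL2 (by rw [hL22]; norm_num)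
  obtain ⟨h1L0, htL0⟩ := hbase0
  obtain ⟨h1L1, hpL1⟩ := hbase1
  obtain ⟨h1L2, hqL2⟩ := hbase2
  have haL : a ≤ C * L0 := lem_CL m t C a L0 hm.le ht ha hL0 ha2 hL02 (by rw [hCdef]; linarith)
  have hbL : b ≤ C * L1 := lem_CL M p C b L1 hM.le hp hb hL1 hb2 hL12 (by rw [hCdef]; linarith)
  have hcL : c ≤ C * L2 := lem_CL M q C c L2 hM.le hq hc hL2 hc2 hL22 (by rw [hCdef]; linarith)
  have hbc : b ≤ c + t := lem_bc M p q t b c hp hq ht hb hc hb2 hc2 htr2 hqc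
  have hcb : c ≤ b + t := lem_bc M q p t c b hq hp ht hc hb hc2 hb2 htr3 hpb
  have hab : a ≤ b + (m + M) + q := lem_ab m M t p q a b hm hM ht hp hq ha hb ha2 hb2 htr1 hpb
  have hba : b ≤ a + (m + M) + q := lem_ba m M t p q a b hm hM ht hp hq ha hb ha2 hb2 htr2 hta
  have hac : a ≤ c + (m + M) + p := lem_ab m M t q p a c hm hM ht hq hp ha hc ha2 hc2 (by linarith) hqc
  have hca : c ≤ a + (m + M) + p := lem_ba m M t q p a c hm hM ht hq hp ha hc ha2 hc2 htr3 hta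
  -- products of elementary positivity facts, precomputed to keep things linear
  have hL0C : L0 ≤ C * L0 := le_mul_of_one_le_left hL0 (by linarith)
  have hgood1 : (m + M) + p ≤ (C - 1) * L1 := by
    have h1 : (m + M) * 1 ≤ (m + M) * L1 := mul_le_mul_of_nonneg_left h1L1 (by linarith)
    have h2 : (m + M) * L1 + L1 = (C - 1) * L1 := by rw [hCdef]; ring
    linarith
  have hgood2 : (m + M) + q ≤ (C - 1) * L2 := by
    have h1 : (m + M) * 1 ≤ (m + M) * L2 := mul_le_mul_of_nonneg_left h1L2 (by linarith)
    have h2 : (m + M) * L2 + L2 = (C - 1) * L2 := by rw [hCdef]; ring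
    linarith
  -- the four factors
  have hA0 : |a + b - c| ≤ 2*C*L0 := abs_le.mpr ⟨by linarith, by linarith⟩
  have hA1 : |a + b - c| ≤ 2*C*L1 := abs_le.mpr ⟨by linarith, by linarith⟩
  have hD1 : |a - b - c| ≤ 2*C*L1 := abs_le.mpr ⟨by linarith, by linarith⟩
  have hD2 : |a - b - c| ≤ 2*C*L2 := abs_le.mpr ⟨by linarith, by linarith⟩
  have hE0 : |a - b + c| ≤ 2*C*L0 := abs_le.mpr ⟨by linarith, by linarith⟩
  have hE2 : |a - b + c| ≤ 2*C*L2 := abs_le.mpr ⟨by linarith, by linarith⟩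
  set S : ℝ := L0 + L1 + L2 with hSdef
  have hS3 : 3 ≤ S := by rw [hSdef]; linarith
  have hCSeq : C * L0 + C * L1 + C * L2 = C * S := by rw [hSdef]; ring
  have h2C0 : (0:ℝ) ≤ 2*C := by linarith
  have h2CS0 : 2*C*L0 ≤ 2*C*S := mul_le_mul_of_nonneg_left (by rw [hSdef]; linarith) h2C0
  have h2CS1 : 2*C*L1 ≤ 2*C*S := mul_le_mul_of_nonneg_left (by rw [hSdef]; linarith) h2C0
  have h2CS2 : 2*C*L2 ≤ 2*C*S := mul_le_mul_of_nonneg_left (by rw [hSdef]; linarith) h2C0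
  have hCS0 : (0:ℝ) ≤ C * S := mul_nonneg hC.le (by rw [hSdef]; linarith)
  have hBS : |a + b + c| ≤ 2*C*S := abs_le.mpr ⟨by linarith, by linarith⟩
  have hAS : |a + b - c| ≤ 2*C*S := le_trans hA0 h2CS0
  have hDS : |a - b - c| ≤ 2*C*S := le_trans hD1 h2CS1
  have hES : |a - b + c| ≤ 2*C*S := le_trans hE0 h2CS0
  -- the polynomial value
  set P : ℝ := 4*(m^2+t^2)*(M^2+p^2) - (m^2+t^2+p^2-q^2)^2 with hPdef
  have hPB : ε*(1 + p^2 + t^2) ≤ P :=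
    lem_Pbound m M ε p q t hm hM hp ht hq (by linarith) htr2 (by linarith) hε3 hε1 hε2
  have hprod4 : (a + b - c) * (a + b + c) * (a - b - c) * (a - b + c) = -P := by
    have h : (a + b - c) * (a + b + c) * (a - b - c) * (a - b + c)
        = (a^2 + b^2 - c^2)^2 - 4*(a^2)*(b^2) := by ring
    rw [h, ha2, hb2, hc2, hPdef]; ring
  have habs : |a + b - c| * |a + b + c| * |a - b - c| * |a - b + c| = P := by
    have h1 : |a + b - c| * |a + b + c| * |a - b - c| * |a - b + c|
        = |(a + b - c) * (a + b + c) * (a - b - c) * (a - b + c)| := by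
      rw [abs_mul, abs_mul, abs_mul]
    rw [h1, hprod4, abs_neg, abs_of_nonneg]
    have h2 : 0 < ε * (1 + p^2 + t^2) := mul_pos hε (by positivity)
    linarith
  have hPS : ε / 12 * S ^ 2 ≤ P := by
    calc ε / 12 * S ^ 2 ≤ ε / 12 * (12*(1 + p^2 + t^2)) := by
          exact mul_le_mul_of_nonneg_left (lem_S p q t L0 L1 L2 hq hL02 hL12 hL22 (by linarith)) (by linarith)
    _ = ε*(1 + p^2 + t^2) := by ring
    _ ≤ P := hPB
  have hS12 := hS3
  -- now the four sign cases
  rcases hs₁ with rfl | rfl <;> rcases hs₂ with rfl | rfl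
  · -- μ = a + b - c
    rw [show a + 1 * b - 1 * c = a + b - c by ring]
    refine combine _ _ L0 L1 L2 h1L0 h1L1 h1L2 ?_ ?_ ?_
    · exact core ε C S L0 (|a+b+c|) (|a-b-c|) (|a-b+c|) (|a+b-c|) P hε hC hS3 h1L0
        (abs_nonneg _) (abs_nonneg _) (abs_nonneg _) habs hPS hBS hDS hE0
    · exact core ε C S L1 (|a+b+c|) (|a-b+c|) (|a-b-c|) (|a+b-c|) P hε hC hS3 h1L1
        (abs_nonneg _) (abs_nonneg _) (abs_nonneg _) (by rw [← habs]; ring) hPS hBS hES hD1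
    · exact core ε C S L2 (|a+b+c|) (|a-b+c|) (|a-b-c|) (|a+b-c|) P hε hC hS3 h1L2
        (abs_nonneg _) (abs_nonneg _) (abs_nonneg _) (by rw [← habs]; ring) hPS hBS hES hD2
  · -- μ = a + b + c
    rw [show a + 1 * b - (-1) * c = a + b + c by ring]
    refine combine _ _ L0 L1 L2 h1L0 h1L1 h1L2 ?_ ?_ ?_
    · exact core ε C S L0 (|a-b-c|) (|a-b+c|) (|a+b-c|) (|a+b+c|) P hε hC hS3 h1L0
        (abs_nonneg _) (abs_nonneg _) (abs_nonneg _) (by rw [← habs]; ring) hPS hDS hES hA0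
    · exact core ε C S L1 (|a-b-c|) (|a-b+c|) (|a+b-c|) (|a+b+c|) P hε hC hS3 h1L1
        (abs_nonneg _) (abs_nonneg _) (abs_nonneg _) (by rw [← habs]; ring) hPS hDS hES hA1
    · exact core ε C S L2 (|a+b-c|) (|a-b+c|) (|a-b-c|) (|a+b+c|) P hε hC hS3 h1L2
        (abs_nonneg _) (abs_nonneg _) (abs_nonneg _) (by rw [← habs]; ring) hPS hAS hES hD2
  · -- μ = a - b - c
    rw [show a + -1 * b - 1 * c = a - b - c by ring]
    refine combine _ _ L0 L1 L2 h1L0 h1L1 h1L2 ?_ ?_ ?_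
    · exact core ε C S L0 (|a+b+c|) (|a-b+c|) (|a+b-c|) (|a-b-c|) P hε hC hS3 h1L0
        (abs_nonneg _) (abs_nonneg _) (abs_nonneg _) (by rw [← habs]; ring) hPS hBS hES hA0
    · exact core ε C S L1 (|a+b+c|) (|a-b+c|) (|a+b-c|) (|a-b-c|) P hε hC hS3 h1L1
        (abs_nonneg _) (abs_nonneg _) (abs_nonneg _) (by rw [← habs]; ring) hPS hBS hES hA1
    · exact core ε C S L2 (|a+b+c|) (|a+b-c|) (|a-b+c|) (|a-b-c|) P hε hC hS3 h1L2
        (abs_nonneg _) (abs_nonneg _) (abs_nonneg _) (by rw [← habs]; ring) hPS hBS hAS hE2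
  · -- μ = a - b + c
    rw [show a + -1 * b - (-1) * c = a - b + c by ring]
    refine combine _ _ L0 L1 L2 h1L0 h1L1 h1L2 ?_ ?_ ?_
    · exact core ε C S L0 (|a+b+c|) (|a-b-c|) (|a+b-c|) (|a-b+c|) P hε hC hS3 h1L0
        (abs_nonneg _) (abs_nonneg _) (abs_nonneg _) (by rw [← habs]; ring) hPS hBS hDS hA0
    · exact core ε C S L1 (|a+b+c|) (|a+b-c|) (|a-b-c|) (|a-b+c|) P hε hC hS3 h1L1
        (abs_nonneg _) (abs_nonneg _) (abs_nonneg _) (by rw [← habs]; ring) hPS hBS hAS hD1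
    · exact core ε C S L2 (|a+b+c|) (|a+b-c|) (|a-b-c|) (|a-b+c|) P hε hC hS3 h1L2
        (abs_nonneg _) (abs_nonneg _) (abs_nonneg _) (by rw [← habs]; ring) hPS hBS hAS hD2

theorem stmt3 (m M : ℝ) (hm : 0 < m) (hM : 0 < M) (hmM : m < 2 * M) :
    ∃ c : ℝ, 0 < c ∧ ∀ (ξ₁ ξ₂ : E2) (s₁ s₂ : ℝ),
      (s₁ = 1 ∨ s₁ = -1) → (s₂ = 1 ∨ s₂ = -1) →
      c * max (jb 1 (ξ₁ - ξ₂))⁻¹ (max (jb 1 ξ₁)⁻¹ (jb 1 ξ₂)⁻¹) ≤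
        |resonance m M s₁ s₂ ξ₁ ξ₂| := by
  obtain ⟨c, hc, H⟩ := nonres_real m M hm hM hmM
  refine ⟨c, hc, ?_⟩
  intro ξ₁ ξ₂ s₁ s₂ hs₁ hs₂
  have htr1 : ‖ξ₁ - ξ₂‖ ≤ ‖ξ₁‖ + ‖ξ₂‖ := norm_sub_le _ _
  have htr2 : ‖ξ₁‖ ≤ ‖ξ₁ - ξ₂‖ + ‖ξ₂‖ := by
    calc ‖ξ₁‖ = ‖(ξ₁ - ξ₂) + ξ₂‖ := by rw [sub_add_cancel]
    _ ≤ ‖ξ₁ - ξ₂‖ + ‖ξ₂‖ := norm_add_le _ _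
  have htr3 : ‖ξ₂‖ ≤ ‖ξ₁ - ξ₂‖ + ‖ξ₁‖ := by
    calc ‖ξ₂‖ = ‖ξ₁ - (ξ₁ - ξ₂)‖ := by rw [sub_sub_cancel]
    _ ≤ ‖ξ₁‖ + ‖ξ₁ - ξ₂‖ := norm_sub_le _ _
    _ = ‖ξ₁ - ξ₂‖ + ‖ξ₁‖ := by ring
  have := H ‖ξ₁ - ξ₂‖ ‖ξ₁‖ ‖ξ₂‖ (norm_nonneg _) (norm_nonneg _) (norm_nonneg _)
    htr1 htr2 htr3 s₁ s₂ hs₁ hs₂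
  simpa [jb, resonance] using this
end
end

section
/- There exists a universal constant C₀ > 0 with the following property. Let s₁, s₂ ∈ {+1, −1}, let k, k₁, k₂ ∈ ℕ and j, j₁, j₂ ∈ ℤ, and let φ, u₁, u₂ : ℝ × ℝ² → ℂ be Schwartz functions whose space-time Fourier transforms satisfy supp φ̂ ⊆ A_k ∩ B^{+1}_j and supp ûᵢ ⊆ A_{kᵢ} ∩ B^{sᵢ}_{jᵢ} for i = 1, 2. If max(j, j₁, j₂) ≤ −min(k, k₁, k₂) − C₀, then ∫_{ℝ×ℝ²} φ(t,x)·u₁(t,x)·conj(u₂(t,x)) dt dx = 0. -/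
noncomputable section

open MeasureTheory
open scoped ENNReal

/-- Space-time ℝ_t × ℝ²_x (equivalently its Fourier dual ℝ_τ × ℝ²_ξ) as ℝ³,
with the time (resp. τ) variable being the 0-th coordinate. -/
abbrev E3 := EuclideanSpace ℝ (Fin 3)

/-- The spatial (frequency) part ξ ∈ ℝ² of a space-time point `z = (τ, ξ)`. -/
def xiv (z : E3) : E2 := (WithLp.equiv 2 (Fin 2 → ℝ)).symm ![z 1, z 2]

/-- The Japanese bracket `⟨ξ⟩ = √(1 + |ξ|²)` of the frequency part. -/
def jxi (z : E3) : ℝ := Real.sqrt (1 + ‖xiv z‖ ^ 2)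

/-- The dyadic frequency region `A_k = {(τ,ξ) : |ξ| ≤ 2^{k+2}, and |ξ| ≥ 2^{k-2} if k ≥ 1}`. -/
def Ak (k : ℕ) : Set E3 :=
  {z | ‖xiv z‖ ≤ (2 : ℝ) ^ ((k : ℝ) + 2) ∧ (1 ≤ k → (2 : ℝ) ^ ((k : ℝ) - 2) ≤ ‖xiv z‖)}

/-- The dyadic modulation region `B^s_j = {(τ,ξ) : 2^{j-2} ≤ |τ + s⟨ξ⟩| ≤ 2^{j+2}}`. -/
def Bsj (s : ℝ) (j : ℤ) : Set E3 :=
  {z | (2 : ℝ) ^ ((j : ℝ) - 2) ≤ |z 0 + s * jxi z| ∧ |z 0 + s * jxi z| ≤ (2 : ℝ) ^ ((j : ℝ) + 2)}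

/-!
On the Fourier side, `∫ φ u₁ ū₂ = ∫ (φ̂ ⋆ û₁) · conj û₂` (Plancherel), and `φ̂ ⋆ û₁` is supported
in `supp φ̂ + supp û₁`; so it suffices that `η + η₁ ∉ supp û₂` whenever `η ∈ supp φ̂`,
`η₁ ∈ supp û₁`. Since time frequencies add, the resonance function
`⟨η⟩ + s₁⟨η₁⟩ - s₂⟨η + η₁⟩` is a signed sum of the three modulations `τ + s⟨ξ⟩`, each at most
`2^{-K-6}` when `C₀ = 8` (`K` the least of `k, k₁, k₂`). On the other hand
`⟨x⟩ + ⟨y⟩ - ⟨x + y⟩ ≥ ⟨x⟩ - |x| = 1 / (⟨x⟩ + |x|)`, which bounds the resonance function below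
by `1 / (2 min ⟨·⟩) ≥ 2^{-K-4}`.
-/

def japaneseBracket {E : Type*} [NormedAddCommGroup E] (x : E) : ℝ := √(1 + ‖x‖ ^ 2)

local notation "⟪" x "⟫" => japaneseBracket x

section JapaneseBracket

variable {E : Type*} [NormedAddCommGroup E]

theorem one_le_japaneseBracket (x : E) : 1 ≤ ⟪x⟫ :=
  Real.one_le_sqrt.2 (le_add_of_nonneg_right (by positivity))

theorem norm_le_japaneseBracket (x : E) : ‖x‖ ≤ ⟪x⟫ :=
  Real.le_sqrt_of_sq_le (by linarith)

theorem japaneseBracket_neg (x : E) : ⟪-x⟫ = ⟪x⟫ := by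
  rw [japaneseBracket, norm_neg, japaneseBracket]

theorem japaneseBracket_le_one_add_norm (x : E) : ⟪x⟫ ≤ 1 + ‖x‖ :=
  Real.sqrt_le_iff.2 ⟨by positivity, by nlinarith [norm_nonneg x]⟩

theorem japaneseBracket_add_le (x y : E) : ⟪x + y⟫ ≤ ‖x‖ + ⟪y⟫ := by
  have hy : ‖y‖ ≤ ⟪y⟫ := norm_le_japaneseBracket y
  have hy2 : ⟪y⟫ ^ 2 = 1 + ‖y‖ ^ 2 := Real.sq_sqrt (by positivity)
  refine Real.sqrt_le_iff.2 ⟨by linarith [norm_nonneg x, norm_nonneg y], ?_⟩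
  nlinarith [norm_add_le x y, norm_nonneg x, norm_nonneg (x + y)]

theorem japaneseBracket_sub_norm (x : E) : ⟪x⟫ - ‖x‖ = (⟪x⟫ + ‖x‖)⁻¹ := by
  have h2 : ⟪x⟫ ^ 2 = 1 + ‖x‖ ^ 2 := Real.sq_sqrt (by positivity)
  exact eq_inv_of_mul_eq_one_left (by linear_combination h2)

theorem inv_two_mul_japaneseBracket_le_add_sub (x y : E) : (2 * ⟪x⟫)⁻¹ ≤ ⟪x⟫ + ⟪y⟫ - ⟪x + y⟫ := by
  have hx : 0 < ⟪x⟫ := one_pos.trans_le (one_le_japaneseBracket x)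
  have : (2 * ⟪x⟫)⁻¹ ≤ ⟪x⟫ - ‖x‖ := by
    rw [japaneseBracket_sub_norm]
    gcongr
    linarith [norm_le_japaneseBracket x]
  linarith [japaneseBracket_add_le x y]

theorem inv_two_mul_le_japaneseBracket_add_sub_of_min_le {M : ℝ} (x y : E)
    (hM : min ⟪x⟫ (min ⟪y⟫ ⟪x + y⟫) ≤ M) : (2 * M)⁻¹ ≤ ⟪x⟫ + ⟪y⟫ - ⟪x + y⟫ := by
  have hM1 : 1 ≤ M := (le_min (one_le_japaneseBracket x)
    (le_min (one_le_japaneseBracket y) (one_le_japaneseBracket (x + y)))).trans hM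
  by_cases hx : ⟪x⟫ ≤ M
  · exact (inv_anti₀ (by linarith [one_le_japaneseBracket x]) (by linarith)).trans
      (inv_two_mul_japaneseBracket_le_add_sub x y)
  by_cases hy : ⟪y⟫ ≤ M
  · rw [add_comm x y, add_comm ⟪x⟫]
    exact (inv_anti₀ (by linarith [one_le_japaneseBracket y]) (by linarith)).trans
      (inv_two_mul_japaneseBracket_le_add_sub y x)
  have hxy : ⟪x + y⟫ ≤ M := by simp_all only [min_le_iff, false_or]
  have : (2 * M)⁻¹ ≤ 1 := inv_le_one_of_one_le₀ (by linarith)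
  linarith [one_le_japaneseBracket y]

theorem inv_two_mul_le_abs_resonance_of_min_le {M s₁ s₂ : ℝ} (hs₁ : s₁ = 1 ∨ s₁ = -1)
    (hs₂ : s₂ = 1 ∨ s₂ = -1) (x y : E) (hM : min ⟪x⟫ (min ⟪y⟫ ⟪x + y⟫) ≤ M) :
    (2 * M)⁻¹ ≤ |⟪x⟫ + s₁ * ⟪y⟫ - s₂ * ⟪x + y⟫| := by
  have hxy := inv_two_mul_le_japaneseBracket_add_sub_of_min_le x y hM
  rcases hs₁ with rfl | rfl <;> rcases hs₂ with rfl | rfl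
  · exact hxy.trans ((by linarith : _ ≤ ⟪x⟫ + 1 * ⟪y⟫ - 1 * ⟪x + y⟫).trans (le_abs_self _))
  · have : 0 ≤ ⟪x + y⟫ := zero_le_one.trans (one_le_japaneseBracket _)
    exact hxy.trans ((by linarith : _ ≤ ⟪x⟫ + 1 * ⟪y⟫ - -1 * ⟪x + y⟫).trans (le_abs_self _))
  · have h := inv_two_mul_le_japaneseBracket_add_sub_of_min_le (x + y) (-y) (M := M) (by
      simp only [japaneseBracket_neg, add_neg_cancel_right, min_le_iff] at hM ⊢; tauto)
    rw [japaneseBracket_neg, add_neg_cancel_right] at h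
    exact h.trans ((by linarith : _ ≤ -(⟪x⟫ + -1 * ⟪y⟫ - 1 * ⟪x + y⟫)).trans (neg_le_abs _))
  · have hy : x + y + -x = y := by abel
    have h := inv_two_mul_le_japaneseBracket_add_sub_of_min_le (x + y) (-x) (M := M) (by
      simp only [japaneseBracket_neg, hy, min_le_iff] at hM ⊢; tauto)
    rw [japaneseBracket_neg, hy] at h
    exact h.trans ((by linarith : _ ≤ ⟪x⟫ + -1 * ⟪y⟫ - -1 * ⟪x + y⟫).trans (le_abs_self _))

end JapaneseBracket

namespace SchwartzMap

open FourierTransform Convolution ComplexConjugate ContinuousLinearMap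
open scoped Pointwise

variable {V : Type*} [NormedAddCommGroup V] [InnerProductSpace ℝ V] [FiniteDimensional ℝ V]
  [MeasurableSpace V] [BorelSpace V]

theorem fourier_mul_eq_convolution (f g : 𝓢(V, ℂ)) :
    𝓕 (fun x => f x * g x) = 𝓕 ⇑f ⋆[mul ℂ ℂ] 𝓕 ⇑g := by
  set c := convolution (mul ℂ ℂ) (𝓕 f) (𝓕 g)
  have hc : ⇑c = 𝓕 ⇑f ⋆[mul ℂ ℂ] 𝓕 ⇑g := funext (convolution_apply _ _ _)
  have hinv : ⇑(𝓕⁻ c : 𝓢(V, ℂ)) = fun x => f x * g x := by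
    ext x
    rw [fourierInv_coe, Real.fourierInv_eq_fourier_neg, hc,
      Real.fourier_mul_convolution_eq (𝓕 f).integrable (𝓕 g).integrable]
    simp [← fourier_coe, ← Real.fourierInv_eq_fourier_neg, ← fourierInv_coe]
  rw [← hinv, ← fourier_coe, fourier_fourierInv_eq, hc]

theorem integral_mul_conj_eq_integral_fourier_mul_conj (f g : 𝓢(V, ℂ)) :
    ∫ x, f x * conj (g x) = ∫ ξ, 𝓕 ⇑f ξ * conj (𝓕 ⇑g ξ) := by
  have := integral_inner_fourier_fourier g f
  simp only [RCLike.inner_apply] at this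
  exact this.symm

theorem integral_mul_mul_conj_eq_zero_of_disjoint (φ u₁ u₂ : 𝓢(V, ℂ))
    (h : Disjoint (Function.support (𝓕 ⇑φ) + Function.support (𝓕 ⇑u₁))
      (Function.support (𝓕 ⇑u₂))) :
    ∫ x, φ x * u₁ x * conj (u₂ x) = 0 := by
  have hzero (ξ : V) : (𝓕 ⇑φ ⋆[mul ℂ ℂ] 𝓕 ⇑u₁) ξ * conj (𝓕 ⇑u₂ ξ) = 0 := by
    by_cases hξ : 𝓕 ⇑u₂ ξ = 0
    · simp [hξ]
    · have hconv := h.mono_left (support_convolution_subset (mul ℂ ℂ) (μ := volume))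
      simp [Function.notMem_support.1 (Set.disjoint_right.1 hconv hξ)]
  have hφu₁ : ⇑(pairing (mul ℂ ℂ) φ u₁) = fun x => φ x * u₁ x := by
    ext x
    simp [pairing_apply_apply]
  calc ∫ x, φ x * u₁ x * conj (u₂ x)
        = ∫ ξ, 𝓕 (fun x => φ x * u₁ x) ξ * conj (𝓕 ⇑u₂ ξ) := by
          simpa only [hφu₁] using
            integral_mul_conj_eq_integral_fourier_mul_conj (pairing (mul ℂ ℂ) φ u₁) u₂
    _ = 0 := by simp [fourier_mul_eq_convolution, hzero]

end SchwartzMap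

theorem xiv_add (a b : E3) : xiv (a + b) = xiv a + xiv b := by
  ext i
  fin_cases i <;> simp [xiv]

theorem jxi_le_of_mem_Ak {k : ℕ} {z : E3} (hz : z ∈ Ak k) : jxi z ≤ 2 ^ ((k : ℝ) + 3) := by
  have h1 : (1 : ℝ) ≤ 2 ^ ((k : ℝ) + 2) := Real.one_le_rpow one_le_two (by positivity)
  have h2 : (2 : ℝ) ^ ((k : ℝ) + 3) = 2 ^ ((k : ℝ) + 2) * 2 := by
    rw [← Real.rpow_add_one two_ne_zero]; ring_nf
  have h3 : jxi z ≤ 1 + ‖xiv z‖ := japaneseBracket_le_one_add_norm (xiv z)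
  linarith [hz.1]

theorem abs_modulation_le_of_mem_Bsj {s J : ℝ} {j : ℤ} {z : E3} (hz : z ∈ Bsj s j)
    (hj : (j : ℝ) ≤ J) : |z 0 + s * jxi z| ≤ 2 ^ (J + 2) :=
  hz.2.trans (Real.rpow_le_rpow_of_exponent_le one_le_two (by linarith))

theorem add_notMem_Ak_inter_Bsj {s₁ s₂ : ℝ} (hs₁ : s₁ = 1 ∨ s₁ = -1) (hs₂ : s₂ = 1 ∨ s₂ = -1)
    {k k₁ k₂ : ℕ} {j j₁ j₂ : ℤ} (hj : (max j (max j₁ j₂) : ℝ) ≤ -(min k (min k₁ k₂) : ℝ) - 8)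
    {η η₁ : E3} (hη : η ∈ Ak k ∩ Bsj 1 j) (hη₁ : η₁ ∈ Ak k₁ ∩ Bsj s₁ j₁) :
    η + η₁ ∉ Ak k₂ ∩ Bsj s₂ j₂ := by
  intro hη₂
  set K : ℝ := min (k : ℝ) (min (k₁ : ℝ) (k₂ : ℝ))
  set t : ℝ := 2 ^ (-K - 6)
  have hmin : min (jxi η) (min (jxi η₁) (jxi (η + η₁))) ≤ 2 ^ (K + 3) := by
    have hmono : Monotone fun x : ℝ => (2 : ℝ) ^ (x + 3) := fun a b hab =>
      Real.rpow_le_rpow_of_exponent_le one_le_two (by linarith)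
    rw [hmono.map_min, hmono.map_min]
    exact min_le_min (jxi_le_of_mem_Ak hη.1)
      (min_le_min (jxi_le_of_mem_Ak hη₁.1) (jxi_le_of_mem_Ak hη₂.1))
  have hlow := inv_two_mul_le_abs_resonance_of_min_le (M := 2 ^ (K + 3)) hs₁ hs₂
    (xiv η) (xiv η₁) (by rwa [← xiv_add])
  rw [← xiv_add] at hlow
  have hmod : ∀ (s : ℝ) (i : ℤ) (z : E3), z ∈ Bsj s i → (i : ℝ) ≤ max (j : ℝ) (max j₁ j₂) →
      |z 0 + s * jxi z| ≤ t := fun s i z hz hi =>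
    (abs_modulation_le_of_mem_Bsj (J := -K - 8) hz (hi.trans hj)).trans_eq
      (by rw [show -K - 8 + 2 = -K - 6 by ring])
  have hup : |jxi η + s₁ * jxi η₁ - s₂ * jxi (η + η₁)| ≤ 3 * t := by
    have h := hmod 1 j η hη.2 (le_max_left _ _)
    have h₁ := hmod s₁ j₁ η₁ hη₁.2 ((le_max_left _ _).trans (le_max_right _ _))
    have h₂ := hmod s₂ j₂ (η + η₁) hη₂.2 ((le_max_right _ _).trans (le_max_right _ _))
    have hsplit : jxi η + s₁ * jxi η₁ - s₂ * jxi (η + η₁) = (η 0 + 1 * jxi η) +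
        (η₁ 0 + s₁ * jxi η₁) - ((η + η₁) 0 + s₂ * jxi (η + η₁)) := by
      simp only [PiLp.add_apply]; ring
    rw [hsplit]
    linarith [abs_sub (η 0 + 1 * jxi η + (η₁ 0 + s₁ * jxi η₁)) ((η + η₁) 0 + s₂ * jxi (η + η₁)),
      abs_add_le (η 0 + 1 * jxi η) (η₁ 0 + s₁ * jxi η₁)]
  have hscale : (2 : ℝ) ^ (K + 3) * t = 1 / 8 := by
    rw [← Real.rpow_add two_pos]; ring_nf; norm_num
  have hone := (inv_le_iff_one_le_mul₀ (by positivity)).1 (hlow.trans hup)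
  linarith [show 3 * t * (2 * 2 ^ (K + 3)) = 6 * (2 ^ (K + 3) * t) by ring]

theorem stmt8 :
    ∃ C₀ : ℝ, 0 < C₀ ∧ ∀ (s₁ s₂ : ℝ), (s₁ = 1 ∨ s₁ = -1) → (s₂ = 1 ∨ s₂ = -1) →
      ∀ (k k₁ k₂ : ℕ) (j j₁ j₂ : ℤ) (φ u₁ u₂ : SchwartzMap E3 ℂ),
      Function.support (VectorFourier.fourierIntegral Real.fourierChar volume (innerₗ E3) ⇑φ) ⊆ Ak k ∩ Bsj 1 j →
      Function.support (VectorFourier.fourierIntegral Real.fourierChar volume (innerₗ E3) ⇑u₁) ⊆ Ak k₁ ∩ Bsj s₁ j₁ →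
      Function.support (VectorFourier.fourierIntegral Real.fourierChar volume (innerₗ E3) ⇑u₂) ⊆ Ak k₂ ∩ Bsj s₂ j₂ →
      ((max j (max j₁ j₂) : ℝ) ≤ -(min k (min k₁ k₂) : ℝ) - C₀) →
      ∫ z : E3, φ z * u₁ z * (starRingEnd ℂ) (u₂ z) = 0 := by
  refine ⟨8, by norm_num, ?_⟩
  intro s₁ s₂ hs₁ hs₂ k k₁ k₂ j j₁ j₂ φ u₁ u₂ hφ hu₁ hu₂ hj
  refine SchwartzMap.integral_mul_mul_conj_eq_zero_of_disjoint φ u₁ u₂ (Set.disjoint_left.2 ?_)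
  rintro _ ⟨η, hη, η₁, hη₁, rfl⟩ hξ
  exact add_notMem_Ak_inter_Bsj hs₁ hs₂ hj (hφ hη) (hu₁ hη₁) (hu₂ hξ)
end
end
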